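/- arXiv:1502.07861 — 3 statements merged into one kernel-verified Lean document; each statement's English description precedes it below -/
import Mathlib

section
/- Let l denote the arc-length metric on the circle group ℝ/ℤ. If X₁ and X₂ are random variables taking values in ℝ/ℤ, each supported in an arc of length at most 1/6, then the group-theoretic expected value satisfies 𝔼(X₁ + X₂) = 𝔼(X₁) + 𝔼(X₂). -/
open MeasureTheory

/-- Additivity of the group-theoretic expected value on the circle group `ℝ/ℤ` for
random variables supported in short arcs.  `Y₁, Y₂` are lifts of the circle-valued
random variables `X₁, X₂` taking values in intervals of length at most `1/6`, and `Z`
is a lift of `X₁ + X₂` taking values in an interval of length at most `1/3`; the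
group-theoretic expected values are the projections to `ℝ/ℤ` of the expectations of
the lifts, and the conclusion is `𝔼(X₁ + X₂) = 𝔼(X₁) + 𝔼(X₂)`. -/
theorem stmt_5 {Ω : Type*} [MeasureSpace Ω] (μ : Measure Ω) [IsProbabilityMeasure μ]
    (Y₁ Y₂ Z : Ω → ℝ) (hY₁ : Integrable Y₁ μ) (hY₂ : Integrable Y₂ μ)
    (hZ : Integrable Z μ)
    (a₁ a₂ c : ℝ)
    (hY₁r : ∀ ω, Y₁ ω ∈ Set.Icc a₁ (a₁ + 1/6))
    (hY₂r : ∀ ω, Y₂ ω ∈ Set.Icc a₂ (a₂ + 1/6))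
    (hZr : ∀ ω, Z ω ∈ Set.Icc c (c + 1/3))
    (hlift : ∀ ω, ((Z ω : AddCircle (1:ℝ))) = (Y₁ ω : AddCircle (1:ℝ)) + (Y₂ ω : AddCircle (1:ℝ))) :
    ((∫ ω, Z ω ∂μ : ℝ) : AddCircle (1:ℝ)) =
      ((∫ ω, Y₁ ω ∂μ : ℝ) : AddCircle (1:ℝ)) + ((∫ ω, Y₂ ω ∂μ : ℝ) : AddCircle (1:ℝ)) := by
  have hne : Nonempty Ω := by
    by_contra h
    rw [not_nonempty_iff] at h
    have := measure_univ (μ := μ)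
    simp [Set.univ_eq_empty_iff.mpr h] at this
  -- the difference is an integer for every ω
  have hint : ∀ ω, ∃ n : ℤ, Z ω - Y₁ ω - Y₂ ω = n := by
    intro ω
    have h := hlift ω
    have h0 : ((Z ω - Y₁ ω - Y₂ ω : ℝ) : AddCircle (1:ℝ)) = 0 := by
      have e : ((Z ω - Y₁ ω - Y₂ ω : ℝ) : AddCircle (1:ℝ))
          = (Z ω : AddCircle (1:ℝ)) - (Y₁ ω : AddCircle (1:ℝ)) - (Y₂ ω : AddCircle (1:ℝ)) := by
        rw [AddCircle.coe_sub, AddCircle.coe_sub]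
      rw [e, h]; abel
    rw [AddCircle.coe_eq_zero_iff] at h0
    obtain ⟨n, hn⟩ := h0
    exact ⟨n, by simpa using hn.symm⟩
  -- the difference is confined to an interval of length 2/3, hence constant
  have hconst : ∀ ω ω', Z ω - Y₁ ω - Y₂ ω = Z ω' - Y₁ ω' - Y₂ ω' := by
    intro ω ω'
    obtain ⟨n, hn⟩ := hint ω
    obtain ⟨m, hm⟩ := hint ω'
    have bnd : ∀ τ, c - a₁ - a₂ - 1/3 ≤ Z τ - Y₁ τ - Y₂ τ ∧
        Z τ - Y₁ τ - Y₂ τ ≤ c - a₁ - a₂ + 1/3 := by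
      intro τ
      have h1 := hY₁r τ; have h2 := hY₂r τ; have h3 := hZr τ
      constructor <;> [nlinarith [h1.1, h1.2, h2.1, h2.2, h3.1, h3.2];
        nlinarith [h1.1, h1.2, h2.1, h2.2, h3.1, h3.2]]
    have b1 := bnd ω; have b2 := bnd ω'
    have : |(n : ℝ) - m| < 1 := by
      rw [abs_sub_lt_iff]
      constructor <;> nlinarith [b1.1, b1.2, b2.1, b2.2]
    have hnm : n = m := by
      have h' : |n - m| < 1 := by
        exact_mod_cast (by push_cast; exact this : |((n - m : ℤ) : ℝ)| < 1)
      have := abs_lt.mp h'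
      omega
    rw [hn, hm, hnm]
  obtain ⟨ω₀⟩ := hne
  obtain ⟨n, hn⟩ := hint ω₀
  have hZeq : ∀ ω, Z ω = Y₁ ω + Y₂ ω + n := by
    intro ω
    have := hconst ω ω₀
    linarith [hn ▸ this]
  have hint_eq : (∫ ω, Z ω ∂μ) = (∫ ω, Y₁ ω ∂μ) + (∫ ω, Y₂ ω ∂μ) + n := by
    calc (∫ ω, Z ω ∂μ) = ∫ ω, (Y₁ ω + Y₂ ω + n) ∂μ := by
          exact integral_congr_ae (Filter.Eventually.of_forall hZeq)
      _ = (∫ ω, Y₁ ω ∂μ) + (∫ ω, Y₂ ω ∂μ) + n := by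
          have : (∫ ω, ((Y₁ ω + Y₂ ω) + (n:ℝ)) ∂μ)
              = (∫ ω, (Y₁ ω + Y₂ ω) ∂μ) + (∫ _ω, (n:ℝ) ∂μ) :=
            integral_add (hY₁.add hY₂) (integrable_const _)
          rw [this, integral_add hY₁ hY₂, integral_const]
          simp
  rw [hint_eq]
  push_cast
  rw [AddCircle.coe_add, AddCircle.coe_add]
  have : ((n : ℝ) : AddCircle (1:ℝ)) = 0 := by
    rw [AddCircle.coe_eq_zero_iff]
    exact ⟨n, by simp⟩
  rw [this, add_zero]
end

section
/- For every ε > 0 there is δ > 0 such that: if A is a compact abelian group and f : A → ℂ is a continuous function satisfying |f(x+a)·conj(f(x)) − f(y+a)·conj(f(y))| ≤ δ for all x, y, a ∈ A, and ||f(x)| − 1| ≤ δ for all x ∈ A, and |f(0) − 1| ≤ δ, then there exists a continuous character χ : A → ℂ (a continuous homomorphism into the unit circle) with |χ(x) − f(x)| ≤ ε for every x ∈ A. -/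
open ComplexConjugate

section AuxStmt6

open Complex Real

lemma aux_sin_lb (θ : ℝ) (h1 : -π < θ) (h2 : θ ≤ π) : |θ| / π ≤ |Real.sin (θ/2)| := by
  have hπ := Real.pi_pos
  rcases le_or_gt 0 θ with h | h
  · rw [_root_.abs_of_nonneg h]
    have hs := Real.mul_le_sin (x := θ/2) (by linarith) (by linarith)
    have habs : Real.sin (θ/2) ≤ |Real.sin (θ/2)| := le_abs_self _
    have he : 2/π * (θ/2) = θ/π := by field_simp
    linarith [he ▸ hs]
  · rw [_root_.abs_of_neg h]
    have hs := Real.mul_le_sin (x := -θ/2) (by linarith) (by linarith)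
    have habs : Real.sin (-θ/2) ≤ |Real.sin (θ/2)| := by
      rw [show -θ/2 = -(θ/2) by ring, Real.sin_neg]
      exact neg_le_abs _
    have he : 2/π * (-θ/2) = -θ/π := by field_simp
    linarith [he ▸ hs]

lemma aux_arg_le {z : ℂ} (hz : ‖z‖ = 1) : |Complex.arg z| ≤ π/2 * ‖z - 1‖ := by
  have hπ := Real.pi_pos
  set θ := Complex.arg z with hθ
  have hzexp : Complex.exp (θ * I) = z := by
    have h := Complex.norm_mul_exp_arg_mul_I z
    rwa [hz, ofReal_one, one_mul] at h
  have h1 : ‖z - 1‖^2 = 2 - 2*Real.cos θ := by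
    rw [← hzexp, Complex.exp_mul_I, Complex.sq_norm]
    simp [Complex.normSq_apply, Complex.cos_ofReal_re, Complex.sin_ofReal_re]
    nlinarith [Real.sin_sq_add_cos_sq θ]
  have h2 : Real.cos θ = 1 - 2 * Real.sin (θ/2)^2 := by
    have hc := Real.cos_two_mul (θ/2)
    have hpy := Real.sin_sq_add_cos_sq (θ/2)
    rw [show 2 * (θ/2) = θ by ring] at hc
    nlinarith
  have h3 := aux_sin_lb θ (Complex.neg_pi_lt_arg z) (Complex.arg_le_pi z)
  have hn : (0:ℝ) ≤ ‖z - 1‖ := norm_nonneg _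
  have h4 : ‖z - 1‖^2 = 4 * Real.sin (θ/2)^2 := by rw [h1, h2]; ring
  have h7 : ‖z - 1‖^2 = (2 * |Real.sin (θ/2)|)^2 := by
    rw [h4, ← _root_.sq_abs (Real.sin (θ/2))]; ring
  have h6 : ‖z - 1‖ = 2 * |Real.sin (θ/2)| := by
    rw [← Real.sqrt_sq hn, h7, Real.sqrt_sq (by positivity)]
  have h8 : |θ| ≤ |Real.sin (θ/2)| * π := (div_le_iff₀ hπ).mp h3
  rw [h6]; linarith

lemma aux_exp_inj {s t : ℝ} (h : Complex.exp (s * I) = Complex.exp (t * I))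
    (hd : |s - t| < 2*π) : s = t := by
  obtain ⟨n, hn⟩ := Complex.exp_eq_exp_iff_exists_int.mp h
  have him : s = t + n * (2*π) := by
    have := congrArg Complex.im hn
    simpa using this
  have hlt : |(n:ℝ)| * (2*π) < 2*π := by
    calc |(n:ℝ)| * (2*π) = |(n:ℝ) * (2*π)| := by
          rw [abs_mul, _root_.abs_of_pos (by positivity : (0:ℝ) < 2*π)]
      _ = |s - t| := by rw [him]; ring_nf
      _ < 2*π := hd
  have hn0 : n = 0 := by
    by_contra h0
    have : (1:ℝ) ≤ |(n:ℝ)| := by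
      rw [← Int.cast_abs]; exact_mod_cast Int.one_le_abs (by omega)
    nlinarith [Real.pi_pos]
  simp [hn0] at him; linarith

open Complex Real MeasureTheory TopologicalSpace
open ComplexConjugate

lemma aux_key {G : Type} [AddCommGroup G] [TopologicalSpace G] [IsTopologicalAddGroup G]
    [CompactSpace G] [T2Space G] (u : G → ℂ) (hu : Continuous u)
    (hnorm : ∀ x, ‖u x‖ = 1) {η : ℝ} (hη0 : 0 ≤ η) (hη1 : η ≤ 1/2)
    (halmost : ∀ a b, ‖u (a + b) - u a * u b‖ ≤ η) :
    ∃ χ : G → ℂ, Continuous χ ∧ (∀ x, ‖χ x‖ = 1) ∧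
      (∀ x y, χ (x + y) = χ x * χ y) ∧ ∀ x, ‖χ x - u x‖ ≤ π * η := by
  have hπ := Real.pi_pos
  letI : MeasurableSpace G := borel G
  haveI : BorelSpace G := ⟨rfl⟩
  haveI : Nonempty G := ⟨0⟩
  set K₀ : PositiveCompacts G := ⟨⟨Set.univ, isCompact_univ⟩, by simp⟩ with hK₀
  set μ : Measure G := Measure.addHaarMeasure K₀ with hμ
  haveI : IsProbabilityMeasure μ := ⟨by
    have := Measure.addHaarMeasure_self (K₀ := K₀); exact this⟩
  -- the unimodular defect
  set v : G → G → ℂ := fun a b => u (a + b) * conj (u a) * conj (u b) with hv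
  have huu : ∀ x, u x * conj (u x) = 1 := by
    intro x
    rw [Complex.mul_conj, Complex.normSq_eq_norm_sq, hnorm]
    norm_num
  have hv1 : ∀ a b, ‖v a b‖ = 1 := by
    intro a b
    simp only [hv, norm_mul, RCLike.norm_conj, hnorm, mul_one]
  have huv : ∀ a b, v a b * (u a * u b) = u (a + b) := by
    intro a b
    simp only [hv]
    linear_combination (u (a + b) * conj (u b) * u b) * huu a + u (a + b) * huu b
  have hvd : ∀ a b, ‖v a b - 1‖ ≤ η := by
    intro a b
    have : (v a b - 1) * (u a * u b) = u (a + b) - u a * u b := by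
      rw [sub_mul, huv, one_mul]
    calc ‖v a b - 1‖ = ‖v a b - 1‖ * (‖u a‖ * ‖u b‖) := by rw [hnorm, hnorm]; ring
      _ = ‖(v a b - 1) * (u a * u b)‖ := by rw [norm_mul, norm_mul]
      _ = ‖u (a + b) - u a * u b‖ := by rw [this]
      _ ≤ η := halmost a b
  -- the small real cocycle
  set c : G → G → ℝ := fun a b => Complex.arg (v a b) with hc
  have hcb : ∀ a b, |c a b| ≤ π/2 * η := by
    intro a b
    refine (aux_arg_le (hv1 a b)).trans ?_
    have := hvd a b
    nlinarith
  have hvexp : ∀ a b, Complex.exp ((c a b : ℝ) * I) = v a b := by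
    intro a b
    have h := Complex.norm_mul_exp_arg_mul_I (v a b)
    rwa [hv1,
      ofReal_one, one_mul] at h
  have hvco : ∀ a b x, v a b * v (a + b) x = v b x * v a (b + x) := by
    intro a b x
    simp only [hv, ← add_assoc]
    linear_combination (u (a + b + x) * conj (u a) * conj (u b) * conj (u x)) *
      (huu (a + b) - huu (b + x))
  have hcco : ∀ a b x, c a b + c (a + b) x = c b x + c a (b + x) := by
    intro a b x
    apply aux_exp_inj
    · rw [ofReal_add, ofReal_add, add_mul, add_mul, Complex.exp_add, Complex.exp_add,
        hvexp, hvexp, hvexp, hvexp]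
      exact hvco a b x
    · have h1 := hcb a b; have h2 := hcb (a + b) x; have h3 := hcb b x; have h4 := hcb a (b + x)
      have e1 : |c a b + c (a+b) x - (c b x + c a (b+x))| ≤ 4 * (π/2*η) := by
        have t1 := abs_sub (c a b + c (a+b) x) (c b x + c a (b+x))
        have t2 := abs_add_le (c a b) (c (a+b) x)
        have t3 := abs_add_le (c b x) (c a (b+x))
        linarith
      nlinarith
  -- continuity of the cocycle
  have hvc : Continuous fun p : G × G => v p.1 p.2 := by
    simp only [hv]
    exact ((hu.comp continuous_add).mul
      (Complex.continuous_conj.comp (hu.comp continuous_fst))).mul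
      (Complex.continuous_conj.comp (hu.comp continuous_snd))
  have hccont : Continuous fun p : G × G => c p.1 p.2 := by
    rw [continuous_iff_continuousAt]
    intro p
    have hre : (1:ℝ)/2 ≤ (v p.1 p.2).re := by
      have h1 := hvd p.1 p.2
      have h2 : |(v p.1 p.2 - 1).re| ≤ ‖v p.1 p.2 - 1‖ := Complex.abs_re_le_norm _
      have h3 : (v p.1 p.2 - 1).re = (v p.1 p.2).re - 1 := by simp
      rw [h3] at h2
      have := abs_le.mp h2
      linarith
    have hsp : v p.1 p.2 ∈ Complex.slitPlane := Or.inl (by linarith)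
    exact ContinuousAt.comp (x := p) (g := Complex.arg)
      (Complex.continuousAt_arg hsp) hvc.continuousAt
  -- the primitive
  have hcint : ∀ a, Integrable (fun x => c a x) μ := by
    intro a
    apply Continuous.integrable_of_hasCompactSupport
    · exact hccont.comp (continuous_const.prodMk continuous_id)
    · exact HasCompactSupport.of_compactSpace _
  set φ : G → ℝ := fun a => ∫ x, c a x ∂μ with hφ
  have hφb : ∀ a, |φ a| ≤ π/2 * η := by
    intro a
    have := norm_integral_le_of_norm_le_const (μ := μ) (f := fun x => c a x)
      (C := π/2 * η) (Filter.Eventually.of_forall fun x => by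
        rw [Real.norm_eq_abs]; exact hcb a x)
    simpa using this
  have hkey : ∀ a b, c a b = φ a + φ b - φ (a + b) := by
    intro a b
    have hinv : ∫ x, c a (b + x) ∂μ = φ a := integral_add_left_eq_self (fun x => c a x) b
    have hrw : (fun x => c a (b + x)) = fun x => c a b + c (a + b) x - c b x := by
      funext x
      have := hcco a b x
      linarith
    rw [hrw] at hinv
    have hint2 : Integrable (fun x => c a b + c (a + b) x) μ :=
      (integrable_const _).add (hcint (a + b))
    rw [integral_sub hint2 (hcint b), integral_add (integrable_const _) (hcint (a + b)),
      integral_const] at hinv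
    have hμ1 : μ.real Set.univ = 1 := by simp
    rw [hμ1] at hinv
    simp only [smul_eq_mul, one_smul] at hinv
    simp only [hφ]
    linarith
  have hφc : Continuous φ := by
    set Φ : C(G × G, ℝ) := ⟨fun p => c p.1 p.2, hccont⟩ with hΦ
    have hint : ∀ g : C(G, ℝ), Integrable (fun x => g x) μ := fun g =>
      g.continuous.integrable_of_hasCompactSupport (HasCompactSupport.of_compactSpace _)
    have hψ : LipschitzWith 1 (fun g : C(G, ℝ) => ∫ x, g x ∂μ) := by
      apply LipschitzWith.of_dist_le_mul
      intro g h
      rw [NNReal.coe_one, one_mul, Real.dist_eq, ← integral_sub (hint g) (hint h)]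
      have hb : ∀ x, ‖g x - h x‖ ≤ dist g h := fun x => by
        rw [Real.norm_eq_abs, ← Real.dist_eq]
        exact ContinuousMap.dist_apply_le_dist x
      have := norm_integral_le_of_norm_le_const (μ := μ)
        (f := fun x => g x - h x) (C := dist g h) (Filter.Eventually.of_forall hb)
      simpa using this
    exact hψ.continuous.comp (ContinuousMap.curry Φ).continuous
  -- the character
  refine ⟨fun x => u x * Complex.exp ((φ x : ℝ) * I), ?_, ?_, ?_, ?_⟩
  · exact hu.mul (Complex.continuous_exp.comp
      ((Complex.continuous_ofReal.comp hφc).mul continuous_const))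
  · intro x
    rw [norm_mul, hnorm, show ‖Complex.exp ((φ x : ℝ) * I)‖ = 1 from by
      exact Complex.norm_exp_ofReal_mul_I _, one_mul]
  · intro a b
    have h3 : ((c a b : ℝ) : ℂ) * I + ((φ (a + b) : ℝ) : ℂ) * I
        = ((φ a : ℝ) : ℂ) * I + ((φ b : ℝ) : ℂ) * I := by
      have := hkey a b
      have : ((c a b : ℝ) : ℂ) + ((φ (a + b) : ℝ) : ℂ) = ((φ a : ℝ) : ℂ) + ((φ b : ℝ):ℂ) := by
        push_cast
        norm_cast
        linarith
      linear_combination this * I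
    calc u (a + b) * Complex.exp ((φ (a + b) : ℝ) * I)
        = (v a b * (u a * u b)) * Complex.exp ((φ (a + b) : ℝ) * I) := by rw [huv]
      _ = (Complex.exp ((c a b : ℝ) * I) * Complex.exp ((φ (a + b) : ℝ) * I)) *
            (u a * u b) := by rw [hvexp]; ring
      _ = Complex.exp (((c a b : ℝ) : ℂ) * I + ((φ (a + b) : ℝ) : ℂ) * I) * (u a * u b) := by
          rw [Complex.exp_add]
      _ = Complex.exp (((φ a : ℝ) : ℂ) * I + ((φ b : ℝ) : ℂ) * I) * (u a * u b) := by rw [h3]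
      _ = (u a * Complex.exp ((φ a : ℝ) * I)) * (u b * Complex.exp ((φ b : ℝ) * I)) := by
          rw [Complex.exp_add]; ring
  · intro x
    have h1 : u x * Complex.exp ((φ x : ℝ) * I) - u x = u x * (Complex.exp ((φ x : ℝ) * I) - 1) := by
      ring
    rw [h1, norm_mul, hnorm, one_mul]
    have h2 : ‖((φ x : ℝ) : ℂ) * I‖ ≤ 1 := by
      rw [norm_mul, Complex.norm_I, mul_one, Complex.norm_real, Real.norm_eq_abs]
      have := hφb x
      nlinarith [Real.pi_le_four]
    have h3 := Complex.norm_exp_sub_one_le h2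
    rw [norm_mul, Complex.norm_I, mul_one, Complex.norm_real, Real.norm_eq_abs] at h3
    have := hφb x
    nlinarith

end AuxStmt6


/-- Rigidity of almost characters: for every `ε > 0` there is `δ > 0` such that any
continuous almost-multiplicative function `f` of almost unit modulus on a compact
abelian group `A` is uniformly `ε`-close to a genuine continuous character of `A`. -/
theorem stmt_6 :
    ∀ ε : ℝ, 0 < ε → ∃ δ : ℝ, 0 < δ ∧
      ∀ (A : Type) [AddCommGroup A] [TopologicalSpace A] [IsTopologicalAddGroup A]
        [CompactSpace A] (f : A → ℂ), Continuous f →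
        (∀ x y a : A, ‖f (x + a) * conj (f x) - f (y + a) * conj (f y)‖ ≤ δ) →
        (∀ x : A, |‖f x‖ - 1| ≤ δ) → ‖f 0 - 1‖ ≤ δ →
        ∃ χ : A → ℂ, Continuous χ ∧ (∀ x, ‖χ x‖ = 1) ∧
          (∀ x y, χ (x + y) = χ x * χ y) ∧ ∀ x, ‖χ x - f x‖ ≤ ε := by
  intro ε hε
  refine ⟨min (ε/30) (1/20), by positivity, ?_⟩
  intro A _ _ _ _ f hf hmul hnf h0
  set δ : ℝ := min (ε/30) (1/20) with hδdef
  have hδε : δ ≤ ε/30 := min_le_left _ _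
  have hδ20 : δ ≤ 1/20 := min_le_right _ _
  have hδ0 : 0 < δ := by positivity
  -- pass to the separation (Kolmogorov) quotient, which is compact Hausdorff
  set Q := SeparationQuotient A with hQ
  haveI : IsTopologicalAddGroup Q := ⟨⟩
  haveI : CompactSpace Q := ⟨by
    have h : Set.range (SeparationQuotient.mk : A → Q) = Set.univ :=
      SeparationQuotient.surjective_mk.range_eq
    rw [← h]; exact isCompact_range SeparationQuotient.continuous_mk⟩
  have hsep : ∀ x y : A, Inseparable x y → f x = f y := fun x y h => (h.map hf).eq
  set F : Q → ℂ := SeparationQuotient.lift f hsep with hFdef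
  have hFmk : ∀ x : A, F (SeparationQuotient.mk x) = f x := fun x =>
    SeparationQuotient.lift_mk hsep x
  have hFc : Continuous F := SeparationQuotient.continuous_lift_iff.mpr hf
  -- transferred hypotheses
  have hmulQ : ∀ x y a : Q, ‖F (x + a) * conj (F x) - F (y + a) * conj (F y)‖ ≤ δ := by
    intro x y a
    obtain ⟨x, rfl⟩ := SeparationQuotient.surjective_mk x
    obtain ⟨y, rfl⟩ := SeparationQuotient.surjective_mk y
    obtain ⟨a, rfl⟩ := SeparationQuotient.surjective_mk a
    rw [← SeparationQuotient.mk_add, ← SeparationQuotient.mk_add, hFmk, hFmk, hFmk, hFmk]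
    exact hmul x y a
  have hnQ : ∀ x : Q, |‖F x‖ - 1| ≤ δ := by
    intro x
    obtain ⟨x, rfl⟩ := SeparationQuotient.surjective_mk x
    rw [hFmk]; exact hnf x
  have h0Q : ‖F 0 - 1‖ ≤ δ := by
    rw [show (0 : Q) = SeparationQuotient.mk 0 from (SeparationQuotient.mk_zero).symm, hFmk]
    exact h0
  -- normalize f to the unit circle
  have hFne : ∀ x : Q, ‖F x‖ ≠ 0 := by
    intro x
    have := abs_le.mp (hnQ x)
    intro hcon
    rw [hcon] at this
    have := this.1
    linarith
  set u : Q → ℂ := fun x => (‖F x‖ : ℂ)⁻¹ * F x with hudef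
  have hun : ∀ x, ‖u x‖ = 1 := by
    intro x
    rw [hudef]
    simp only [norm_mul, norm_inv, Complex.norm_real, Real.norm_eq_abs,
      abs_norm]
    exact inv_mul_cancel₀ (hFne x)
  have huc : Continuous u := by
    refine Continuous.mul (Continuous.inv₀ (Complex.continuous_ofReal.comp hFc.norm) ?_) hFc
    intro x
    exact_mod_cast hFne x
  have huF : ∀ x, ‖u x - F x‖ ≤ δ := by
    intro x
    have h1 : u x - F x = (((‖F x‖)⁻¹ - 1 : ℝ) : ℂ) * F x := by
      rw [hudef]; push_cast; ring
    rw [h1, norm_mul, Complex.norm_real, Real.norm_eq_abs]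
    have h2 : |(‖F x‖)⁻¹ - 1| * ‖F x‖ = |1 - ‖F x‖| := by
      have e : |(‖F x‖)⁻¹ - 1| * ‖F x‖ = |((‖F x‖)⁻¹ - 1) * ‖F x‖| := by
        rw [abs_mul, _root_.abs_of_nonneg (norm_nonneg _)]
      rw [e, sub_mul, inv_mul_cancel₀ (hFne x), one_mul]
    rw [h2, abs_sub_comm]
    exact hnQ x
  -- almost multiplicativity of u
  have halmost : ∀ a b : Q, ‖u (a + b) - u a * u b‖ ≤ 9 * δ := by
    intro a b
    have hsub1 : ‖F (a + b) * conj (F a) - F b * conj (F 0)‖ ≤ δ := by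
      have := hmulQ a 0 b
      rwa [zero_add] at this
    have hbA := abs_le.mp (hnQ (a + b))
    have hbB := abs_le.mp (hnQ a)
    have hbC := abs_le.mp (hnQ b)
    have hc0 : ‖conj (F 0) - 1‖ ≤ δ := by
      rw [show conj (F 0) - 1 = conj (F 0 - 1) by rw [map_sub, map_one], RCLike.norm_conj]
      exact h0Q
    have t2 : ‖F b * conj (F 0) - F b‖ ≤ (1 + δ) * δ := by
      rw [show F b * conj (F 0) - F b = F b * (conj (F 0) - 1) by ring, norm_mul]
      exact mul_le_mul (by linarith) hc0 (norm_nonneg _) (by linarith)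
    have h1 : ‖F (a + b) * conj (F a) - F b‖ ≤ δ + (1 + δ) * δ := by
      rw [show F (a + b) * conj (F a) - F b
          = (F (a + b) * conj (F a) - F b * conj (F 0)) + (F b * conj (F 0) - F b) by ring]
      exact (norm_add_le _ _).trans (by linarith)
    have h2 : ‖F (a + b) * (conj (F a) * F a) - F b * F a‖ ≤ (δ + (1 + δ) * δ) * (1 + δ) := by
      rw [show F (a + b) * (conj (F a) * F a) - F b * F a
          = (F (a + b) * conj (F a) - F b) * F a by ring, norm_mul]
      exact mul_le_mul h1 (by linarith) (norm_nonneg _) (by positivity)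
    have h3 : conj (F a) * F a = ((‖F a‖ ^ 2 : ℝ) : ℂ) := by
      rw [mul_comm, Complex.mul_conj, Complex.normSq_eq_norm_sq]
    have h4 : ‖F (a + b) * (1 - ((‖F a‖ ^ 2 : ℝ) : ℂ))‖ ≤ (1 + δ) * (δ * (2 + δ)) := by
      rw [norm_mul]
      have e1 : ‖(1 - ((‖F a‖ ^ 2 : ℝ) : ℂ))‖ = |1 - ‖F a‖ ^ 2| := by
        rw [show (1 - ((‖F a‖ ^ 2 : ℝ) : ℂ)) = (((1 - ‖F a‖ ^ 2 : ℝ)) : ℂ) by push_cast; ring,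
          Complex.norm_real, Real.norm_eq_abs]
      rw [e1]
      have e2 : |1 - ‖F a‖ ^ 2| ≤ δ * (2 + δ) := by
        rw [abs_le]
        constructor <;> nlinarith
      exact mul_le_mul (by linarith) e2 (abs_nonneg _) (by linarith)
    have h5 : ‖F (a + b) - F b * F a‖ ≤ 5 * δ := by
      rw [show F (a + b) - F b * F a
          = (F (a + b) * (conj (F a) * F a) - F b * F a)
            + F (a + b) * (1 - ((‖F a‖ ^ 2 : ℝ) : ℂ)) by rw [h3]; push_cast; ring]
      refine (norm_add_le _ _).trans ?_
      have harith : (δ + (1 + δ) * δ) * (1 + δ) + (1 + δ) * (δ * (2 + δ)) ≤ 5 * δ := by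
        nlinarith [hδ0.le, hδ20, sq_nonneg δ]
      linarith [h2, h4]
    have h6 : ‖F b * F a - u a * u b‖ ≤ δ * (1 + δ) + δ := by
      rw [show F b * F a - u a * u b = (F a - u a) * F b + u a * (F b - u b) by ring]
      refine (norm_add_le _ _).trans ?_
      rw [norm_mul, norm_mul, hun]
      have e1 : ‖F a - u a‖ ≤ δ := by rw [norm_sub_rev]; exact huF a
      have e2 : ‖F b - u b‖ ≤ δ := by rw [norm_sub_rev]; exact huF b
      have := mul_le_mul e1 (show ‖F b‖ ≤ 1 + δ by linarith) (norm_nonneg _) hδ0.le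
      linarith
    rw [show u (a + b) - u a * u b
        = (u (a + b) - F (a + b)) + (F (a + b) - F b * F a) + (F b * F a - u a * u b) by ring]
    refine ((norm_add_le _ _).trans (add_le_add (norm_add_le _ _) le_rfl)).trans ?_
    have h7 := huF (a + b)
    have harith2 : δ * (1 + δ) ≤ 2 * δ := by nlinarith [hδ0.le, hδ20]
    linarith [h5, h6, h7]
  -- apply the rigidity lemma on the quotient
  obtain ⟨χQ, hχc, hχn, hχm, hχu⟩ := aux_key u huc hun
    (by positivity) (by linarith : 9 * δ ≤ 1/2) halmost
  refine ⟨fun x => χQ (SeparationQuotient.mk x),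
    hχc.comp SeparationQuotient.continuous_mk, fun x => hχn _, ?_, ?_⟩
  · intro x y
    show χQ (SeparationQuotient.mk (x + y))
        = χQ (SeparationQuotient.mk x) * χQ (SeparationQuotient.mk y)
    rw [SeparationQuotient.mk_add]
    exact hχm _ _
  · intro x
    show ‖χQ (SeparationQuotient.mk x) - f x‖ ≤ ε
    have h1 : ‖χQ (SeparationQuotient.mk x) - f x‖
        ≤ ‖χQ (SeparationQuotient.mk x) - u (SeparationQuotient.mk x)‖
          + ‖u (SeparationQuotient.mk x) - F (SeparationQuotient.mk x)‖ := by
      rw [← hFmk x]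
      exact norm_sub_le_norm_sub_add_norm_sub _ _ _
    have h2 := hχu (SeparationQuotient.mk x)
    have h3 := huF (SeparationQuotient.mk x)
    have hπ : Real.pi < 3.15 := Real.pi_lt_d2
    have hπ0 := Real.pi_pos
    have hp : Real.pi * (9 * δ) ≤ 3.15 * (9 * δ) :=
      mul_le_mul_of_nonneg_right hπ.le (by positivity)
    have h30 : 30 * δ ≤ ε := by linarith
    linarith
end

section
/- For every ε > 0 there is N(ε) such that if A is a finite abelian group with |A| ≥ N(ε) and f : A → [0,1] is any function, then there exists a function h : A → {0,1} with ‖f − h‖_{U₂} ≤ ε. -/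
open Finset

namespace Stmt9Aux

set_option linter.unusedSectionVars false


variable {A : Type} [Fintype A] [DecidableEq A]

def mu (f : A → ℝ) (a : A) (b : Bool) : ℝ := if b then f a else 1 - f a

def wgt (f : A → ℝ) (H : A → Bool) : ℝ := ∏ a, mu f a (H a)

def gg (f : A → ℝ) (H : A → Bool) (a : A) : ℝ := f a - (if H a then 1 else 0)

def MM (f : A → ℝ) (a : A) (k : ℕ) : ℝ := f a * (f a - 1) ^ k + (1 - f a) * (f a) ^ k

lemma expect_monomial (f : A → ℝ) (L : A → ℕ) :
    ∑ H : A → Bool, wgt f H * ∏ a, gg f H a ^ L a = ∏ a, MM f a (L a) := by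
  have h1 : ∀ H : A → Bool, wgt f H * ∏ a, gg f H a ^ L a
      = ∏ a, (mu f a (H a) * (f a - (if H a then 1 else 0)) ^ L a) := by
    intro H
    rw [wgt, ← Finset.prod_mul_distrib]
    rfl
  simp only [h1]
  rw [show (Finset.univ : Finset (A → Bool))
      = Fintype.piFinset (fun _ : A => (Finset.univ : Finset Bool)) from
        (Fintype.piFinset_univ).symm,
    ← Finset.prod_univ_sum (fun _ : A => (Finset.univ : Finset Bool))
      (fun a b => mu f a b * (f a - if b then 1 else 0) ^ L a)]
  refine Finset.prod_congr rfl fun a _ => ?_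
  simp [MM, mu]

lemma sum_wgt (f : A → ℝ) : ∑ H : A → Bool, wgt f H = 1 := by
  have h := expect_monomial f (fun _ => 0)
  have h2 : ∀ a : A, MM f a 0 = 1 := fun a => by
    simp only [MM, pow_zero, mul_one]; ring
  simpa [h2] using h

lemma expect_four (f : A → ℝ) (p q r s : A) :
    ∑ H : A → Bool, wgt f H * (gg f H p * gg f H q * gg f H r * gg f H s)
      = ∏ a, MM f a ((if p = a then 1 else 0) + (if q = a then 1 else 0)
          + (if r = a then 1 else 0) + (if s = a then 1 else 0)) := by
  have h1 : ∀ (H : A → Bool),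
      gg f H p * gg f H q * gg f H r * gg f H s
        = ∏ a, gg f H a ^ ((if p = a then 1 else 0) + (if q = a then 1 else 0)
          + (if r = a then 1 else 0) + (if s = a then 1 else 0)) := by
    intro H
    simp only [pow_add, Finset.prod_mul_distrib, pow_ite, pow_one, pow_zero,
      Finset.prod_ite_eq, Finset.mem_univ, if_true]
  simp only [h1]
  exact expect_monomial f _

lemma MM_le (f : A → ℝ) (hf : ∀ a, f a ∈ Set.Icc (0:ℝ) 1) (a : A) (k : ℕ) :
    |MM f a k| ≤ 1 := by
  obtain ⟨h0, h1⟩ := hf a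
  have e1 : |f a - 1| ≤ 1 := by rw [abs_le]; constructor <;> linarith
  have e2 : |f a| ≤ 1 := by rw [abs_le]; constructor <;> linarith
  have p1 : |(f a - 1) ^ k| ≤ 1 := by
    rw [abs_pow]; exact pow_le_one₀ (abs_nonneg _) e1
  have p2 : |(f a) ^ k| ≤ 1 := by
    rw [abs_pow]; exact pow_le_one₀ (abs_nonneg _) e2
  calc |MM f a k| ≤ |f a * (f a - 1) ^ k| + |(1 - f a) * (f a) ^ k| := abs_add_le _ _
    _ = f a * |(f a - 1) ^ k| + (1 - f a) * |(f a) ^ k| := by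
        rw [abs_mul, abs_mul, abs_of_nonneg h0,
          abs_of_nonneg (show (0:ℝ) ≤ 1 - f a by linarith)]
    _ ≤ f a * 1 + (1 - f a) * 1 :=
        add_le_add (mul_le_mul_of_nonneg_left p1 h0)
          (mul_le_mul_of_nonneg_left p2 (by linarith))
    _ = 1 := by ring

lemma MM_one (f : A → ℝ) (a : A) : MM f a 1 = 0 := by
  simp only [MM, pow_one]; ring


variable [AddCommGroup A]

lemma expect_term_le (f : A → ℝ) (hf : ∀ a, f a ∈ Set.Icc (0:ℝ) 1) (x a b : A) :
    ∑ H : A → Bool, wgt f H *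
        (gg f H x * gg f H (x + a) * gg f H (x + b) * gg f H (x + a + b))
      ≤ (if a = 0 then (1:ℝ) else 0) + (if b = 0 then 1 else 0)
        + (if a + b = 0 then 1 else 0) := by
  rw [expect_four]
  have t1 : (0:ℝ) ≤ (if a = 0 then (1:ℝ) else 0) := by split_ifs <;> norm_num
  have t2 : (0:ℝ) ≤ (if b = 0 then (1:ℝ) else 0) := by split_ifs <;> norm_num
  have t3 : (0:ℝ) ≤ (if a + b = 0 then (1:ℝ) else 0) := by split_ifs <;> norm_num
  by_cases hcond : a = 0 ∨ b = 0 ∨ a + b = 0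
  · have hle1 : (∏ a', MM f a' ((if x = a' then 1 else 0) + (if x + a = a' then 1 else 0)
        + (if x + b = a' then 1 else 0) + (if x + a + b = a' then 1 else 0))) ≤ 1 := by
      refine le_trans (le_abs_self _) ?_
      rw [Finset.abs_prod]
      exact Finset.prod_le_one (fun _ _ => abs_nonneg _) (fun i _ => MM_le f hf i _)
    have hge1 : (1:ℝ) ≤ (if a = 0 then (1:ℝ) else 0) + (if b = 0 then 1 else 0)
        + (if a + b = 0 then 1 else 0) := by
      rcases hcond with h | h | h
      · rw [if_pos h]; linarith
      · rw [if_pos h]; linarith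
      · rw [if_pos h]; linarith
    linarith
  · push_neg at hcond
    obtain ⟨ha, hb, hab⟩ := hcond
    have hcnt : ((if x = x then 1 else 0) + (if x + a = x then 1 else 0)
        + (if x + b = x then 1 else 0) + (if x + a + b = x then (1:ℕ) else 0)) = 1 := by
      rw [if_pos rfl, if_neg, if_neg, if_neg]
      · intro h; exact hab (by rwa [add_assoc, add_eq_left] at h)
      · intro h; exact hb (by rwa [add_eq_left] at h)
      · intro h; exact ha (by rwa [add_eq_left] at h)
    have hzero : (∏ a', MM f a' ((if x = a' then 1 else 0) + (if x + a = a' then 1 else 0)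
        + (if x + b = a' then 1 else 0) + (if x + a + b = a' then 1 else 0))) = 0 := by
      refine Finset.prod_eq_zero (Finset.mem_univ x) ?_
      rw [hcnt, MM_one]
    rw [hzero]
    linarith

lemma count_sum (n : ℕ) (hn : Fintype.card A = n) :
    ∑ x : A, ∑ a : A, ∑ b : A,
      ((if a = 0 then (1:ℝ) else 0) + (if b = 0 then 1 else 0)
        + (if a + b = 0 then 1 else 0)) = 3 * (n:ℝ) ^ 2 := by
  have e1 : ∀ a : A, ∑ b : A, (if a + b = 0 then (1:ℝ) else 0) = 1 := by
    intro a
    rw [Finset.sum_eq_single (-a)]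
    · simp
    · intro c _ hc
      rw [if_neg]
      intro h
      exact hc (eq_neg_of_add_eq_zero_right h)
    · simp
  have e2 : ∑ b : A, (if b = 0 then (1:ℝ) else 0) = 1 := by
    rw [Finset.sum_eq_single (0:A)] <;> simp +contextual
  have e3 : ∀ x : A, ∑ a : A, ∑ b : A,
      ((if a = 0 then (1:ℝ) else 0) + (if b = 0 then 1 else 0)
        + (if a + b = 0 then 1 else 0)) = 3 * (n:ℝ) := by
    intro x
    have e4 : ∀ a : A, ∑ b : A, ((if a = 0 then (1:ℝ) else 0) + (if b = 0 then 1 else 0)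
        + (if a + b = 0 then 1 else 0)) = (n:ℝ) * (if a = 0 then (1:ℝ) else 0) + 2 := by
      intro a
      rw [Finset.sum_add_distrib, Finset.sum_add_distrib, e1 a, e2,
        Finset.sum_const, card_univ, hn, nsmul_eq_mul]
      ring
    rw [Finset.sum_congr rfl fun a _ => e4 a, Finset.sum_add_distrib, ← Finset.mul_sum, e2,
      Finset.sum_const, card_univ, hn, nsmul_eq_mul]
    ring
  rw [Finset.sum_congr rfl fun x _ => e3 x, Finset.sum_const, card_univ, hn, nsmul_eq_mul]
  ring


lemma wgt_nonneg (f : A → ℝ) (hf : ∀ a, f a ∈ Set.Icc (0:ℝ) 1) (H : A → Bool) :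
    0 ≤ wgt f H := by
  refine Finset.prod_nonneg fun a _ => ?_
  obtain ⟨h0, h1⟩ := hf a
  unfold mu
  split_ifs <;> linarith

lemma sq_form (g : A → ℝ) :
    ∑ x : A, ∑ a : A, ∑ b : A, g x * g (x + a) * g (x + b) * g (x + a + b)
      = ∑ b : A, (∑ y : A, g y * g (y + b)) ^ 2 := by
  have h1 : ∀ x b : A, ∑ a : A, g x * g (x + a) * g (x + b) * g (x + a + b)
      = (g x * g (x + b)) * ∑ y : A, g y * g (y + b) := by
    intro x b
    rw [Finset.mul_sum,
      ← Equiv.sum_comp (Equiv.addLeft x) (fun y => g x * g (x + b) * (g y * g (y + b)))]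
    refine Finset.sum_congr rfl fun a _ => ?_
    simp only [Equiv.coe_addLeft]
    ring
  calc ∑ x : A, ∑ a : A, ∑ b : A, g x * g (x + a) * g (x + b) * g (x + a + b)
      = ∑ x : A, ∑ b : A, ∑ a : A, g x * g (x + a) * g (x + b) * g (x + a + b) :=
        Finset.sum_congr rfl fun x _ => Finset.sum_comm
    _ = ∑ b : A, ∑ x : A, ∑ a : A, g x * g (x + a) * g (x + b) * g (x + a + b) :=
        Finset.sum_comm
    _ = ∑ b : A, (∑ y : A, g y * g (y + b)) ^ 2 := by
        refine Finset.sum_congr rfl fun b _ => ?_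
        rw [Finset.sum_congr rfl fun x _ => h1 x b, ← Finset.sum_mul]
        ring

lemma key (f : A → ℝ) (hf : ∀ a, f a ∈ Set.Icc (0:ℝ) 1) :
    ∃ H : A → Bool,
      ∑ x : A, ∑ a : A, ∑ b : A,
          gg f H x * gg f H (x + a) * gg f H (x + b) * gg f H (x + a + b)
        ≤ 3 * (Fintype.card A : ℝ) ^ 2 := by
  by_contra hc
  push_neg at hc
  have havg : ∑ H : A → Bool, wgt f H * (∑ x : A, ∑ a : A, ∑ b : A,
      gg f H x * gg f H (x + a) * gg f H (x + b) * gg f H (x + a + b))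
      ≤ 3 * (Fintype.card A : ℝ) ^ 2 := by
    have hswap : ∑ H : A → Bool, wgt f H * (∑ x : A, ∑ a : A, ∑ b : A,
        gg f H x * gg f H (x + a) * gg f H (x + b) * gg f H (x + a + b))
        = ∑ x : A, ∑ a : A, ∑ b : A, ∑ H : A → Bool, wgt f H *
            (gg f H x * gg f H (x + a) * gg f H (x + b) * gg f H (x + a + b)) := by
      simp only [Finset.mul_sum]
      rw [Finset.sum_comm]
      refine Finset.sum_congr rfl fun x _ => ?_
      rw [Finset.sum_comm]
      exact Finset.sum_congr rfl fun a _ => Finset.sum_comm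
    rw [hswap, ← count_sum (Fintype.card A) rfl]
    refine Finset.sum_le_sum fun x _ => Finset.sum_le_sum fun a _ =>
      Finset.sum_le_sum fun b _ => expect_term_le f hf x a b
  have h1 : (3 * (Fintype.card A : ℝ) ^ 2) = ∑ H : A → Bool, wgt f H *
      (3 * (Fintype.card A : ℝ) ^ 2) := by
    rw [← Finset.sum_mul, sum_wgt, one_mul]
  have hex : ∃ H : A → Bool, wgt f H ≠ 0 := by
    by_contra hz
    push_neg at hz
    have : (∑ H : A → Bool, wgt f H) = 0 := Finset.sum_eq_zero fun H _ => hz H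
    rw [sum_wgt] at this
    norm_num at this
  obtain ⟨H₀, hH₀⟩ := hex
  have hH₀pos : 0 < wgt f H₀ := lt_of_le_of_ne (wgt_nonneg f hf H₀) (Ne.symm hH₀)
  have hlt : ∑ H : A → Bool, wgt f H * (3 * (Fintype.card A : ℝ) ^ 2)
      < ∑ H : A → Bool, wgt f H * (∑ x : A, ∑ a : A, ∑ b : A,
          gg f H x * gg f H (x + a) * gg f H (x + b) * gg f H (x + a + b)) := by
    refine Finset.sum_lt_sum (fun H _ => ?_) ⟨H₀, Finset.mem_univ H₀, ?_⟩
    · exact mul_le_mul_of_nonneg_left (hc H).le (wgt_nonneg f hf H)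
    · exact mul_lt_mul_of_pos_left (hc H₀) hH₀pos
  rw [← h1] at hlt
  linarith


end Stmt9Aux

/-- For every `ε > 0` there is `N(ε)` such that on any finite abelian group `A` with
`|A| ≥ N(ε)`, every `f : A → [0,1]` admits a `{0,1}`-valued `h` with
`‖f − h‖_{U₂} ≤ ε` (the Gowers `U₂`-norm with uniform expectations over `A`). -/
theorem stmt_9 :
    ∀ ε : ℝ, 0 < ε → ∃ N : ℕ,
      ∀ (A : Type) [AddCommGroup A] [Fintype A], N ≤ Fintype.card A →
        ∀ f : A → ℝ, (∀ a, f a ∈ Set.Icc (0:ℝ) 1) →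
          ∃ h : A → ℝ, (∀ a, h a = 0 ∨ h a = 1) ∧
            (((Fintype.card A : ℝ) ^ 3)⁻¹ *
                ∑ x : A, ∑ a : A, ∑ b : A,
                  (f x - h x) * (f (x + a) - h (x + a)) * (f (x + b) - h (x + b)) *
                    (f (x + a + b) - h (x + a + b))) ^ ((1 : ℝ)/4) ≤ ε := by
  intro ε hε
  refine ⟨⌈(3:ℝ) / ε ^ 4⌉₊ + 1, ?_⟩
  intro A _ _ hcard f hf
  classical
  obtain ⟨H, hS3⟩ := Stmt9Aux.key f hf
  refine ⟨fun a => if H a then 1 else 0, fun a => by by_cases hb : H a <;> simp [hb], ?_⟩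
  have hEq : ∀ y : A, f y - (fun a => if H a then (1:ℝ) else 0) y = Stmt9Aux.gg f H y :=
    fun y => rfl
  simp only [hEq]
  have hn1 : 1 ≤ Fintype.card A := le_trans (Nat.le_add_left 1 _) hcard
  have hnpos : (0:ℝ) < (Fintype.card A : ℝ) := by exact_mod_cast hn1
  set Ssum : ℝ := ∑ x : A, ∑ a : A, ∑ b : A,
      Stmt9Aux.gg f H x * Stmt9Aux.gg f H (x + a) * Stmt9Aux.gg f H (x + b) *
        Stmt9Aux.gg f H (x + a + b) with hSdef
  have h0 : 0 ≤ Ssum := by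
    rw [hSdef, Stmt9Aux.sq_form]
    exact Finset.sum_nonneg fun b _ => sq_nonneg _
  have hQ0 : 0 ≤ ((Fintype.card A : ℝ) ^ 3)⁻¹ * Ssum :=
    mul_nonneg (by positivity) h0
  have hQ : ((Fintype.card A : ℝ) ^ 3)⁻¹ * Ssum ≤ ε ^ 4 := by
    have h3 : (3:ℝ) / (Fintype.card A : ℝ) ≤ ε ^ 4 := by
      rw [div_le_iff₀ hnpos]
      have hle : (3:ℝ) / ε ^ 4 ≤ (Fintype.card A : ℝ) := by
        calc (3:ℝ) / ε ^ 4 ≤ (⌈(3:ℝ) / ε ^ 4⌉₊ : ℝ) := Nat.le_ceil _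
          _ ≤ (Fintype.card A : ℝ) := by
              exact_mod_cast le_trans (Nat.le_succ _) hcard
      calc (3:ℝ) = ε ^ 4 * (3 / ε ^ 4) := by field_simp
        _ ≤ ε ^ 4 * (Fintype.card A : ℝ) :=
            mul_le_mul_of_nonneg_left hle (by positivity)
    have h2 : ((Fintype.card A : ℝ) ^ 3)⁻¹ * (3 * (Fintype.card A : ℝ) ^ 2)
        = 3 / (Fintype.card A : ℝ) := by
      field_simp
    calc ((Fintype.card A : ℝ) ^ 3)⁻¹ * Ssum
        ≤ ((Fintype.card A : ℝ) ^ 3)⁻¹ * (3 * (Fintype.card A : ℝ) ^ 2) :=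
          mul_le_mul_of_nonneg_left hS3 (by positivity)
      _ = 3 / (Fintype.card A : ℝ) := h2
      _ ≤ ε ^ 4 := h3
  calc (((Fintype.card A : ℝ) ^ 3)⁻¹ * Ssum) ^ ((1:ℝ)/4)
      ≤ (ε ^ 4) ^ ((1:ℝ)/4) := Real.rpow_le_rpow hQ0 hQ (by norm_num)
    _ = ε := by
        rw [← Real.rpow_natCast ε 4, ← Real.rpow_mul hε.le]
        norm_num
end
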